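/- Let α > 1 and z > 0 be real numbers. Let σ₁, ρ₁ be n×n and σ₂, ρ₂ be m×m complex positive semidefinite matrices, and suppose x₁, x₂ are matrices satisfying ρ_i^{α/z} = σ_i^{(α−1)/(2z)} · x_i · σ_i^{(α−1)/(2z)} for i = 1, 2. Then (ρ₁ ⊗ₖ ρ₂)^{α/z} = (σ₁ ⊗ₖ σ₂)^{(α−1)/(2z)} · (x₁ ⊗ₖ x₂) · (σ₁ ⊗ₖ σ₂)^{(α−1)/(2z)}, and trace(|x₁ ⊗ₖ x₂|^z) = trace(|x₁|^z) · trace(|x₂|^z). -/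

import Mathlib

open Matrix Kronecker ComplexOrder

/-- The `r`-th power of a complex square matrix, obtained via the (real) continuous
functional calculus applied to `t ↦ t ^ r` (real `rpow`, so that `0 ^ r = 0` for `r ≠ 0`). -/
noncomputable def matRpow {k : Type*} [Fintype k] [DecidableEq k]
    (A : Matrix k k ℂ) (r : ℝ) : Matrix k k ℂ :=
  cfc (fun x : ℝ => x ^ r) A

/-- The absolute value `|A| := (Aᴴ · A)^{1/2}` of a complex square matrix, where the square
root is taken via the continuous functional calculus. -/
noncomputable def matAbs {k : Type*} [Fintype k] [DecidableEq k]
    (A : Matrix k k ℂ) : Matrix k k ℂ :=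
  matRpow (Aᴴ * A) (1 / 2 : ℝ)

/-!
If `A = U D U*` and `B = V E V*` are spectral decompositions, then
`A ⊗ₖ B = (U ⊗ₖ V) (D ⊗ₖ E) (U ⊗ₖ V)*` is one of `A ⊗ₖ B`, with eigenvalues the products
`λᵢ μⱼ`. Hence `f (A ⊗ₖ B) = f A ⊗ₖ f B` whenever `f (a b) = f a f b` on the spectra, which holds
for `t ↦ t ^ r` on positive semidefinite matrices. The witness identity then follows from the
mixed-product rule, and the trace identity from `|x₁ ⊗ₖ x₂| = |x₁| ⊗ₖ |x₂|` and
`trace (X ⊗ₖ Y) = trace X * trace Y`.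
-/

namespace Matrix

open Unitary

variable {𝕜 ι κ : Type*} [RCLike 𝕜] [DecidableEq ι] [DecidableEq κ]

lemma isSelfAdjoint_diagonal_ofReal (v : ι → ℝ) :
    IsSelfAdjoint (diagonal (RCLike.ofReal ∘ v) : Matrix ι ι 𝕜) :=
  isHermitian_diagonal_of_self_adjoint _ (by ext; simp [RCLike.star_def])

lemma diagonal_ofReal_kronecker (a : ι → ℝ) (b : κ → ℝ) :
    (diagonal (RCLike.ofReal ∘ a) : Matrix ι ι 𝕜) ⊗ₖ diagonal (RCLike.ofReal ∘ b)
      = diagonal (RCLike.ofReal ∘ fun p => a p.1 * b p.2) := by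
  rw [diagonal_kronecker_diagonal]
  simp [Function.comp_def]

variable [Fintype ι] [Fintype κ]

open Polynomial in
lemma aeval_diagonal {R α : Type*} [CommSemiring R] [CommSemiring α] [Algebra R α]
    (p : R[X]) (v : ι → α) : aeval (diagonal v) p = diagonal fun i => aeval (v i) p := by
  simpa [aeval_pi_apply] using aeval_algHom_apply (diagonalAlgHom R : (ι → α) →ₐ[R] _) v p

lemma spectrum_real_diagonal_ofReal (v : ι → ℝ) :
    spectrum ℝ (diagonal (RCLike.ofReal ∘ v) : Matrix ι ι 𝕜) = Set.range v := by
  ext x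
  rw [← spectrum.algebraMap_mem_iff 𝕜, spectrum_diagonal, RCLike.algebraMap_eq_ofReal]
  simp

lemma cfc_diagonal_ofReal (f : ℝ → ℝ) (v : ι → ℝ) :
    cfc f (diagonal (RCLike.ofReal ∘ v) : Matrix ι ι 𝕜) = diagonal (RCLike.ofReal ∘ f ∘ v) := by
  classical
  -- on the finite spectrum `f` agrees with its Lagrange interpolation polynomial
  set p := Lagrange.interpolate (Finset.univ.image v) id f
  have hp (i : ι) : p.eval (v i) = f (v i) :=
    Lagrange.eval_interpolate_at_node f (Set.injOn_id _)
      (Finset.mem_image_of_mem v (Finset.mem_univ i))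
  rw [cfc_congr (g := fun x => p.eval x), cfc_polynomial p _ (isSelfAdjoint_diagonal_ofReal v),
    aeval_diagonal]
  · congr 1
    funext i
    simp [← RCLike.algebraMap_eq_ofReal, Polynomial.aeval_algebraMap_apply, hp]
  · rw [spectrum_real_diagonal_ofReal]
    rintro _ ⟨i, rfl⟩
    exact (hp i).symm

lemma cfc_conjStarAlgAut (W : unitary (Matrix ι ι 𝕜)) (f : ℝ → ℝ) {M : Matrix ι ι 𝕜}
    (hM : IsSelfAdjoint M) :
    cfc f (conjStarAlgAut 𝕜 _ W M) = conjStarAlgAut 𝕜 _ W (cfc f M) := by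
  refine (StarAlgHomClass.map_cfc (R := ℝ) (conjStarAlgAut 𝕜 _ W) f M ?_ ?_ hM
    (hM.conjugate _)).symm
  · rw [continuousOn_iff_continuous_domRestrict]
    fun_prop
  · exact LinearMap.continuous_of_finiteDimensional (conjStarAlgAut 𝕜 _ W).toAlgEquiv.toLinearMap

def unitaryKronecker (U : unitary (Matrix ι ι 𝕜)) (V : unitary (Matrix κ κ 𝕜)) :
    unitary (Matrix (ι × κ) (ι × κ) 𝕜) :=
  ⟨(U : Matrix ι ι 𝕜) ⊗ₖ (V : Matrix κ κ 𝕜), kronecker_mem_unitary U.2 V.2⟩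

lemma conjStarAlgAut_kronecker (U : unitary (Matrix ι ι 𝕜)) (V : unitary (Matrix κ κ 𝕜))
    (M : Matrix ι ι 𝕜) (N : Matrix κ κ 𝕜) :
    conjStarAlgAut 𝕜 _ U M ⊗ₖ conjStarAlgAut 𝕜 _ V N
      = conjStarAlgAut 𝕜 (Matrix (ι × κ) (ι × κ) 𝕜) (unitaryKronecker U V) (M ⊗ₖ N) := by
  simp only [conjStarAlgAut_apply, unitaryKronecker, star_eq_conjTranspose, mul_kronecker_mul,
    conjTranspose_kronecker]

theorem cfc_kronecker {A : Matrix ι ι 𝕜} {B : Matrix κ κ 𝕜} (hA : A.IsHermitian)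
    (hB : B.IsHermitian) {f : ℝ → ℝ}
    (hf : ∀ a ∈ spectrum ℝ A, ∀ b ∈ spectrum ℝ B, f (a * b) = f a * f b) :
    cfc f (A ⊗ₖ B) = cfc f A ⊗ₖ cfc f B := by
  rw [hA.cfc_eq, hB.cfc_eq, IsHermitian.cfc, IsHermitian.cfc]
  conv_lhs => rw [hA.spectral_theorem, hB.spectral_theorem]
  rw [conjStarAlgAut_kronecker, conjStarAlgAut_kronecker, diagonal_ofReal_kronecker,
    diagonal_ofReal_kronecker, cfc_conjStarAlgAut _ _ (isSelfAdjoint_diagonal_ofReal _),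
    cfc_diagonal_ofReal]
  congr 2
  funext p
  simp [hf _ (hA.eigenvalues_mem_spectrum_real _) _ (hB.eigenvalues_mem_spectrum_real _)]

end Matrix

section MatrixPower

open scoped MatrixOrder

variable {ι κ : Type*} [Fintype ι] [DecidableEq ι] [Fintype κ] [DecidableEq κ]

lemma matRpow_kronecker {A : Matrix ι ι ℂ} {B : Matrix κ κ ℂ} (hA : A.PosSemidef)
    (hB : B.PosSemidef) (r : ℝ) : matRpow (A ⊗ₖ B) r = matRpow A r ⊗ₖ matRpow B r :=
  cfc_kronecker hA.1 hB.1 fun _ ha _ hb =>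
    Real.mul_rpow (spectrum_nonneg_of_nonneg hA.nonneg ha) (spectrum_nonneg_of_nonneg hB.nonneg hb)

lemma posSemidef_matRpow {A : Matrix ι ι ℂ} (hA : A.PosSemidef) (r : ℝ) :
    (matRpow A r).PosSemidef :=
  (cfc_nonneg fun _ hx => Real.rpow_nonneg (spectrum_nonneg_of_nonneg hA.nonneg hx) r).posSemidef

lemma posSemidef_matAbs (A : Matrix ι ι ℂ) : (matAbs A).PosSemidef :=
  posSemidef_matRpow (posSemidef_conjTranspose_mul_self A) _

lemma matAbs_kronecker (A : Matrix ι ι ℂ) (B : Matrix κ κ ℂ) :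
    matAbs (A ⊗ₖ B) = matAbs A ⊗ₖ matAbs B := by
  rw [matAbs, conjTranspose_kronecker, ← mul_kronecker_mul]
  exact matRpow_kronecker (posSemidef_conjTranspose_mul_self A)
    (posSemidef_conjTranspose_mul_self B) _

end MatrixPower

theorem renyi_az_multiplicative_of_gt_one_general {n m : ℕ}
    (σ₁ ρ₁ x₁ : Matrix (Fin n) (Fin n) ℂ) (σ₂ ρ₂ x₂ : Matrix (Fin m) (Fin m) ℂ)
    (hσ₁ : σ₁.PosSemidef) (hρ₁ : ρ₁.PosSemidef) (hσ₂ : σ₂.PosSemidef) (hρ₂ : ρ₂.PosSemidef)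
    (α z : ℝ)
    (hx₁ : matRpow ρ₁ (α / z)
      = matRpow σ₁ ((α - 1) / (2 * z)) * x₁ * matRpow σ₁ ((α - 1) / (2 * z)))
    (hx₂ : matRpow ρ₂ (α / z)
      = matRpow σ₂ ((α - 1) / (2 * z)) * x₂ * matRpow σ₂ ((α - 1) / (2 * z))) :
    matRpow (ρ₁ ⊗ₖ ρ₂) (α / z)
      = matRpow (σ₁ ⊗ₖ σ₂) ((α - 1) / (2 * z)) * (x₁ ⊗ₖ x₂)
        * matRpow (σ₁ ⊗ₖ σ₂) ((α - 1) / (2 * z)) ∧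
    (matRpow (matAbs (x₁ ⊗ₖ x₂)) z).trace
      = (matRpow (matAbs x₁) z).trace * (matRpow (matAbs x₂) z).trace := by
  constructor
  · rw [matRpow_kronecker hρ₁ hρ₂, matRpow_kronecker hσ₁ hσ₂, hx₁, hx₂, mul_kronecker_mul,
      mul_kronecker_mul]
  · rw [matAbs_kronecker, matRpow_kronecker (posSemidef_matAbs x₁) (posSemidef_matAbs x₂),
      trace_kronecker]

/-- The α > 1 case of multiplicativity of the α-z-Rényi quantity: if `xᵢ` witnesses
identity (♠) for the pair `(ρᵢ, σᵢ)`, then `x₁ ⊗ₖ x₂` witnesses (♠) for the Kronecker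
products, and `trace(|x₁ ⊗ₖ x₂|^z) = trace(|x₁|^z) · trace(|x₂|^z)`. -/
theorem renyi_az_multiplicative_of_gt_one {n m : ℕ}
    (σ₁ ρ₁ x₁ : Matrix (Fin n) (Fin n) ℂ) (σ₂ ρ₂ x₂ : Matrix (Fin m) (Fin m) ℂ)
    (hσ₁ : σ₁.PosSemidef) (hρ₁ : ρ₁.PosSemidef) (hσ₂ : σ₂.PosSemidef) (hρ₂ : ρ₂.PosSemidef)
    (α z : ℝ) (hα : 1 < α) (hz : 0 < z)
    (hx₁ : matRpow ρ₁ (α / z)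
      = matRpow σ₁ ((α - 1) / (2 * z)) * x₁ * matRpow σ₁ ((α - 1) / (2 * z)))
    (hx₂ : matRpow ρ₂ (α / z)
      = matRpow σ₂ ((α - 1) / (2 * z)) * x₂ * matRpow σ₂ ((α - 1) / (2 * z))) :
    matRpow (ρ₁ ⊗ₖ ρ₂) (α / z)
      = matRpow (σ₁ ⊗ₖ σ₂) ((α - 1) / (2 * z)) * (x₁ ⊗ₖ x₂)
        * matRpow (σ₁ ⊗ₖ σ₂) ((α - 1) / (2 * z)) ∧
    (matRpow (matAbs (x₁ ⊗ₖ x₂)) z).trace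
      = (matRpow (matAbs x₁) z).trace * (matRpow (matAbs x₂) z).trace :=
  renyi_az_multiplicative_of_gt_one_general σ₁ ρ₁ x₁ σ₂ ρ₂ x₂ hσ₁ hρ₁ hσ₂ hρ₂ α z hx₁ hx₂
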